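/- Let G be a finite-dimensional Hopf algebra, λ : M → G ⊗ M a left coaction on an algebra M, and ρ : M → M ⊗ G_op the right coaction defined by ρ = (id ⊗ S⁻¹) ∘ τ_{G,M} ∘ λ, where τ swaps tensor factors. Then the map f : M ⋊_ρ Ĝ^cop → Ĝ ⋉_λ M defined by f(m ⋊ φ) := (1̂ ⋉ m)(φ ⋉ 1_M) is an algebra isomorphism with inverse f⁻¹(φ ⋉ m) = (1_M ⋊ φ)(m ⋊ 1̂). -/

import Mathlib

open TensorProduct Coalgebra HopfAlgebra

suppress_compilation



section aux
variable {H : Type*} [Ring H] [HopfAlgebra ℂ H]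

lemma sum_counit_smul {ι : Type*} (φ : H) (r : Coalgebra.Repr ℂ φ ι) :
    ∑ i ∈ r.index, Coalgebra.counit (R := ℂ) (r.left i) • r.right i = φ := by
  have h := congrArg (TensorProduct.lid ℂ H) (Coalgebra.sum_counit_tmul_eq r)
  simp only [map_sum, TensorProduct.lid_tmul, one_smul] at h
  exact h

lemma key1 {ι κ : Type*} (φ : H) (r : Coalgebra.Repr ℂ φ ι) (a : ∀ i : ι, Coalgebra.Repr ℂ (r.right i) κ) :
    ∑ i ∈ r.index, ∑ j ∈ (a i).index,
      (r.left i * HopfAlgebra.antipode (R := ℂ) ((a i).left j)) ⊗ₜ[ℂ] (a i).right j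
      = (1 : H) ⊗ₜ[ℂ] φ := by
  have h := Coalgebra.sum_tmul_tmul_eq r (fun i => ℛ ℂ (r.left i)) a
  apply_fun (LinearMap.rTensor H
      (LinearMap.mul' ℂ H ∘ₗ LinearMap.lTensor H (HopfAlgebra.antipode (R := ℂ)))
      ∘ₗ (TensorProduct.assoc ℂ H H H).symm.toLinearMap) at h
  simp only [map_sum, LinearMap.comp_apply, LinearEquiv.coe_coe,
    TensorProduct.assoc_symm_tmul, LinearMap.rTensor_tmul, LinearMap.mul'_apply,
    LinearMap.lTensor_tmul] at h
  rw [← h]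
  have step : ∀ i ∈ r.index,
      ∑ j ∈ (ℛ ℂ (r.left i)).index,
        ((ℛ ℂ (r.left i)).left j * HopfAlgebra.antipode (R := ℂ) ((ℛ ℂ (r.left i)).right j))
          ⊗ₜ[ℂ] r.right i
      = (1 : H) ⊗ₜ[ℂ] (Coalgebra.counit (R := ℂ) (r.left i) • r.right i) := by
    intro i _
    rw [← TensorProduct.sum_tmul, HopfAlgebra.sum_mul_antipode_eq_smul (ℛ ℂ (r.left i)),
      TensorProduct.smul_tmul]
  rw [Finset.sum_congr rfl step, ← TensorProduct.tmul_sum, _root_.sum_counit_smul]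

lemma key2 {ι κ : Type*} (φ : H) (r : Coalgebra.Repr ℂ φ ι) (a : ∀ i : ι, Coalgebra.Repr ℂ (r.right i) κ) :
    ∑ i ∈ r.index, ∑ j ∈ (a i).index,
      (HopfAlgebra.antipode (R := ℂ) (r.left i) * (a i).left j) ⊗ₜ[ℂ] (a i).right j
      = (1 : H) ⊗ₜ[ℂ] φ := by
  have h := Coalgebra.sum_tmul_tmul_eq r (fun i => ℛ ℂ (r.left i)) a
  apply_fun (LinearMap.rTensor H
      (LinearMap.mul' ℂ H ∘ₗ LinearMap.rTensor H (HopfAlgebra.antipode (R := ℂ)))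
      ∘ₗ (TensorProduct.assoc ℂ H H H).symm.toLinearMap) at h
  simp only [map_sum, LinearMap.comp_apply, LinearEquiv.coe_coe,
    TensorProduct.assoc_symm_tmul, LinearMap.rTensor_tmul, LinearMap.mul'_apply] at h
  rw [← h]
  have step : ∀ i ∈ r.index,
      ∑ j ∈ (ℛ ℂ (r.left i)).index,
        (HopfAlgebra.antipode (R := ℂ) ((ℛ ℂ (r.left i)).left j) * (ℛ ℂ (r.left i)).right j)
          ⊗ₜ[ℂ] r.right i
      = (1 : H) ⊗ₜ[ℂ] (Coalgebra.counit (R := ℂ) (r.left i) • r.right i) := by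
    intro i _
    rw [← TensorProduct.sum_tmul, HopfAlgebra.sum_antipode_mul_eq_smul (ℛ ℂ (r.left i)),
      TensorProduct.smul_tmul]
  rw [Finset.sum_congr rfl step, ← TensorProduct.tmul_sum, _root_.sum_counit_smul]

lemma key3 {ι κ ν : Type*} (φ : H) (r : Coalgebra.Repr ℂ φ ι) (a : ∀ i : ι, Coalgebra.Repr ℂ (r.right i) κ)
    (c : ∀ (i : ι) (j : κ), Coalgebra.Repr ℂ ((a i).left j) ν) :
    ∑ i ∈ r.index, ∑ j ∈ (a i).index, ∑ u ∈ (c i j).index,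
      (HopfAlgebra.antipode (R := ℂ) (r.left i) * (c i j).left u)
        ⊗ₜ[ℂ] ((c i j).right u ⊗ₜ[ℂ] (a i).right j)
      = (1 : H) ⊗ₜ[ℂ] Coalgebra.comul (R := ℂ) φ := by
  -- first transform the inner double sums using coassociativity
  have inner : ∀ i ∈ r.index,
      ∑ j ∈ (a i).index, ∑ u ∈ (c i j).index,
        (HopfAlgebra.antipode (R := ℂ) (r.left i) * (c i j).left u)
          ⊗ₜ[ℂ] ((c i j).right u ⊗ₜ[ℂ] (a i).right j)
      = ∑ j ∈ (a i).index, ∑ v ∈ (ℛ ℂ ((a i).right j)).index,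
        (HopfAlgebra.antipode (R := ℂ) (r.left i) * (a i).left j)
          ⊗ₜ[ℂ] ((ℛ ℂ ((a i).right j)).left v ⊗ₜ[ℂ] (ℛ ℂ ((a i).right j)).right v) := by
    intro i _
    have h := Coalgebra.sum_tmul_tmul_eq (a i) (c i) (fun j => ℛ ℂ ((a i).right j))
    apply_fun (LinearMap.rTensor (H ⊗[ℂ] H)
        (LinearMap.mulLeft ℂ (HopfAlgebra.antipode (R := ℂ) (r.left i)))) at h
    simpa only [map_sum, LinearMap.rTensor_tmul,
      LinearMap.mulLeft_apply] using h
  rw [Finset.sum_congr rfl inner]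
  have collapse : ∀ i ∈ r.index, ∀ j ∈ (a i).index,
      ∑ v ∈ (ℛ ℂ ((a i).right j)).index,
        (HopfAlgebra.antipode (R := ℂ) (r.left i) * (a i).left j)
          ⊗ₜ[ℂ] ((ℛ ℂ ((a i).right j)).left v ⊗ₜ[ℂ] (ℛ ℂ ((a i).right j)).right v)
      = (HopfAlgebra.antipode (R := ℂ) (r.left i) * (a i).left j)
          ⊗ₜ[ℂ] Coalgebra.comul (R := ℂ) ((a i).right j) := by
    intro i _ j _
    rw [← TensorProduct.tmul_sum, (ℛ ℂ ((a i).right j)).eq]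
  have h2 : ∑ i ∈ r.index, ∑ j ∈ (a i).index,
      (HopfAlgebra.antipode (R := ℂ) (r.left i) * (a i).left j)
        ⊗ₜ[ℂ] Coalgebra.comul (R := ℂ) ((a i).right j)
      = (1 : H) ⊗ₜ[ℂ] Coalgebra.comul (R := ℂ) φ := by
    have h := congrArg (LinearMap.lTensor H (Coalgebra.comul (R := ℂ))) (key2 φ r a)
    simpa only [map_sum, LinearMap.lTensor_tmul] using h
  rw [← h2]
  exact Finset.sum_congr rfl fun i hi => Finset.sum_congr rfl fun j hj => collapse i hi j hj

end aux



section aux2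
variable {H : Type*} [Ring H] [HopfAlgebra ℂ H]

/-- product of two comultiplication representations -/
noncomputable def reprMul {ι κ : Type*} {x y : H} (r1 : Coalgebra.Repr ℂ x ι)
    (r2 : Coalgebra.Repr ℂ y κ) :
    Coalgebra.Repr ℂ (x * y) (ι × κ) where
  index := r1.index ×ˢ r2.index
  left p := r1.left p.1 * r2.left p.2
  right p := r1.right p.1 * r2.right p.2
  eq := by
    rw [Finset.sum_product]
    calc ∑ i ∈ r1.index, ∑ j ∈ r2.index,
          (r1.left i * r2.left j) ⊗ₜ[ℂ] (r1.right i * r2.right j)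
        = ∑ i ∈ r1.index, ∑ j ∈ r2.index,
          (r1.left i ⊗ₜ[ℂ] r1.right i) * (r2.left j ⊗ₜ[ℂ] r2.right j) := by
          simp [Algebra.TensorProduct.tmul_mul_tmul]
      _ = (∑ i ∈ r1.index, r1.left i ⊗ₜ[ℂ] r1.right i) *
          (∑ j ∈ r2.index, r2.left j ⊗ₜ[ℂ] r2.right j) := by
          rw [Finset.sum_mul_sum]
      _ = Coalgebra.comul (R := ℂ) x * Coalgebra.comul (R := ℂ) y := by rw [r1.eq, r2.eq]
      _ = Coalgebra.comul (R := ℂ) (x * y) := (Bialgebra.comul_mul x y).symm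

end aux2
/-- Let `G` be a finite-dimensional Hopf algebra, `λ : M → G ⊗ M` a left
coaction with dual right Hopf module action `◁` of `Ĝ`, and `ρ = (id ⊗ S⁻¹) ∘ τ ∘ λ` the
associated right `G_op`-coaction, whose dual left action is `φ ▷ m = m ◁ Ŝ⁻¹(φ)`.
Dual-free formulation: `H := Ĝ^cop` is a Hopf algebra (whose antipode is `Ŝ⁻¹`), `◁` is the
right Hopf module action of `Ĝ = H^cop` on `M` (encoded by `ract`, with the `cop`-module
algebra law), and `φ ▷ m := m ◁ S_H(φ)`.  Then `f(m ⋊ φ) := (1̂ ⋉ m)(φ ⋉ 1_M)` is an algebra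
isomorphism `M ⋊_ρ Ĝ^cop → Ĝ ⋉_λ M` with inverse `f⁻¹(φ ⋉ m) = (1_M ⋊ φ)(m ⋊ 1̂)`. -/
theorem statement1
    (H M : Type*) [Ring H] [HopfAlgebra ℂ H] [Ring M] [Algebra ℂ M]
    [FiniteDimensional ℂ H]
    -- `◁` : right Hopf module action of `H^cop` on `M`  (`ract φ m = m ◁ φ`)
    (ract : H →ₗ[ℂ] M →ₗ[ℂ] M)
    (hract_mul : ∀ (φ ψ : H) (m : M), ract ψ (ract φ m) = ract (φ * ψ) m)
    (hract_one : ∀ m : M, ract 1 m = m)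
    (hract_alg : ∀ (φ : H) (m n : M),
      ract φ (m * n) =
        LinearMap.mul' ℂ M
          (TensorProduct.map (ract.flip m) (ract.flip n)
            ((TensorProduct.comm ℂ H H) (Coalgebra.comul (R := ℂ) φ))))
    (hract_unit : ∀ φ : H, ract φ (1 : M) = Coalgebra.counit (R := ℂ) φ • (1 : M))
    -- the crossed product `M ⋊_ρ Ĝ^cop`, with `(m ⋊ φ)(n ⋊ ψ) = m(φ₁ ▷ n) ⋊ φ₂ψ`,
    -- where `φ ▷ n = n ◁ S_H(φ)`
    (mulR : M ⊗[ℂ] H →ₗ[ℂ] M ⊗[ℂ] H →ₗ[ℂ] M ⊗[ℂ] H)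
    (hmulR : ∀ (m n : M) (φ ψ : H),
      mulR (m ⊗ₜ[ℂ] φ) (n ⊗ₜ[ℂ] ψ) =
        TensorProduct.map
          (LinearMap.mulLeft ℂ m ∘ₗ ract.flip n ∘ₗ HopfAlgebra.antipode (R := ℂ))
          (LinearMap.mulRight ℂ ψ) (Coalgebra.comul (R := ℂ) φ))
    -- the crossed product `Ĝ ⋉_λ M`, with `(φ ⋉ m)(ψ ⋉ n) = φψ₍₁₎' ⋉ (m ◁ ψ₍₂₎')n`
    -- (Sweedler legs of `Ĝ = H^cop`, i.e. `= φψ₂ ⋉ (m ◁ ψ₁)n` in `H`-Sweedler notation)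
    (mulL : H ⊗[ℂ] M →ₗ[ℂ] H ⊗[ℂ] M →ₗ[ℂ] H ⊗[ℂ] M)
    (hmulL : ∀ (φ ψ : H) (m n : M),
      mulL (φ ⊗ₜ[ℂ] m) (ψ ⊗ₜ[ℂ] n) =
        (TensorProduct.comm ℂ M H)
          (TensorProduct.map (LinearMap.mulRight ℂ n ∘ₗ ract.flip m)
            (LinearMap.mulLeft ℂ φ) (Coalgebra.comul (R := ℂ) ψ)))
    -- the maps `f` and `f⁻¹`
    (f : M ⊗[ℂ] H →ₗ[ℂ] H ⊗[ℂ] M) (g : H ⊗[ℂ] M →ₗ[ℂ] M ⊗[ℂ] H)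
    (hf : ∀ (m : M) (φ : H),
      f (m ⊗ₜ[ℂ] φ) = mulL ((1 : H) ⊗ₜ[ℂ] m) (φ ⊗ₜ[ℂ] (1 : M)))
    (hg : ∀ (φ : H) (m : M),
      g (φ ⊗ₜ[ℂ] m) = mulR ((1 : M) ⊗ₜ[ℂ] φ) (m ⊗ₜ[ℂ] (1 : H))) :
    (∀ x y : M ⊗[ℂ] H, f (mulR x y) = mulL (f x) (f y)) ∧
    f ((1 : M) ⊗ₜ[ℂ] (1 : H)) = (1 : H) ⊗ₜ[ℂ] (1 : M) ∧
    (∀ x : M ⊗[ℂ] H, g (f x) = x) ∧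
    (∀ y : H ⊗[ℂ] M, f (g y) = y) := by
  
  classical
  -- evaluation of f on simple tensors
  have f_tmul : ∀ {ι : Type _} (m : M) (φ : H) (r : Coalgebra.Repr ℂ φ ι),
      f (m ⊗ₜ[ℂ] φ) = ∑ i ∈ r.index, r.right i ⊗ₜ[ℂ] ract (r.left i) m := by
    intro _ m φ r
    rw [hf, hmulL, ← r.eq]
    simp only [map_sum, TensorProduct.map_tmul, LinearMap.comp_apply,
      LinearMap.mulRight_apply, LinearMap.mulLeft_apply, LinearMap.flip_apply,
      mul_one, one_mul, TensorProduct.comm_tmul]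
  have g_tmul : ∀ (φ : H) (m : M) (r : Coalgebra.Repr ℂ φ (H × H)),
      g (φ ⊗ₜ[ℂ] m) = ∑ i ∈ r.index,
        ract (HopfAlgebra.antipode (R := ℂ) (r.left i)) m ⊗ₜ[ℂ] r.right i := by
    intro φ m r
    rw [hg, hmulR, ← r.eq]
    simp only [map_sum, TensorProduct.map_tmul, LinearMap.comp_apply,
      LinearMap.mulRight_apply, LinearMap.mulLeft_apply, LinearMap.flip_apply,
      mul_one, one_mul]
  refine ⟨?_, ?_, ?_, ?_⟩
  · -- multiplicativity
    intro x y
    induction x using TensorProduct.induction_on with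
    | zero => simp
    | add u v hu hv => simp [map_add, hu, hv, LinearMap.add_apply]
    | tmul m phi =>
      induction y using TensorProduct.induction_on with
      | zero => simp
      | add u v hu hv => simp [map_add, hu, hv]
      | tmul n psi =>
        set r := ℛ ℂ phi with hrdef
        set s := ℛ ℂ psi with hsdef
        set a : (i : H × H) → Coalgebra.Repr ℂ (r.right i) (H × H) := fun i => ℛ ℂ (r.right i)
          with hadef
        set c : (i : H × H) → (j : H × H) → Coalgebra.Repr ℂ ((a i).left j) (H × H) :=
          fun i j => ℛ ℂ ((a i).left j) with hcdef
        set d : (k : H × H) → Coalgebra.Repr ℂ (s.left k) (H × H) := fun k => ℛ ℂ (s.left k) with hddef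
        set e : (k : H × H) → Coalgebra.Repr ℂ (s.right k) (H × H) := fun k => ℛ ℂ (s.right k)
          with hedef
        set B : (H ⊗[ℂ] (H ⊗[ℂ] H)) ⊗[ℂ] (H ⊗[ℂ] (H ⊗[ℂ] H)) →ₗ[ℂ] H ⊗[ℂ] M :=
          (TensorProduct.comm ℂ M H).toLinearMap
          ∘ₗ LinearMap.rTensor H (LinearMap.mul' ℂ M ∘ₗ (TensorProduct.comm ℂ M M).toLinearMap)
          ∘ₗ (TensorProduct.assoc ℂ M M H).symm.toLinearMap
          ∘ₗ TensorProduct.map (ract.flip n ∘ₗ LinearMap.mul' ℂ H)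
              (TensorProduct.map (ract.flip m ∘ₗ LinearMap.mul' ℂ H) (LinearMap.mul' ℂ H)
                ∘ₗ (TensorProduct.tensorTensorTensorComm ℂ H H H H).toLinearMap)
          ∘ₗ (TensorProduct.tensorTensorTensorComm ℂ H (H ⊗[ℂ] H) H (H ⊗[ℂ] H)).toLinearMap
          with hBdef
        have hB : ∀ (p1 p2 p3 q1 q2 q3 : H),
            B ((p1 ⊗ₜ[ℂ] (p2 ⊗ₜ[ℂ] p3)) ⊗ₜ[ℂ] (q1 ⊗ₜ[ℂ] (q2 ⊗ₜ[ℂ] q3)))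
            = (p3 * q3) ⊗ₜ[ℂ] (ract (p2 * q2) m * ract (p1 * q1) n) := by
          intro p1 p2 p3 q1 q2 q3
          simp only [hBdef, LinearMap.comp_apply, LinearEquiv.coe_coe,
            TensorProduct.tensorTensorTensorComm_tmul, TensorProduct.map_tmul,
            LinearMap.mul'_apply, LinearMap.flip_apply, TensorProduct.assoc_symm_tmul,
            LinearMap.rTensor_tmul, TensorProduct.comm_tmul]
        have act1 : ∀ (i : H × H) (j : H × H) (k : H × H),
            ract ((a i).left j * s.left k)
              (m * ract (HopfAlgebra.antipode (R := ℂ) (r.left i)) n)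
            = ∑ u ∈ (c i j).index, ∑ v ∈ (d k).index,
                ract ((c i j).right u * (d k).right v) m *
                ract ((HopfAlgebra.antipode (R := ℂ) (r.left i) * (c i j).left u) *
                  (d k).left v) n := by
          intro i j k
          rw [← hract_mul, hract_alg, ← (c i j).eq]
          simp only [map_sum, TensorProduct.comm_tmul, TensorProduct.map_tmul,
            LinearMap.mul'_apply, LinearMap.flip_apply]
          refine Finset.sum_congr rfl fun u _ => ?_
          rw [hract_mul, hract_alg, ← (d k).eq]
          simp only [map_sum, TensorProduct.comm_tmul, TensorProduct.map_tmul,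
            LinearMap.mul'_apply, LinearMap.flip_apply]
          refine Finset.sum_congr rfl fun v _ => ?_
          rw [hract_mul, hract_mul]
        have lhs1 : f (mulR (m ⊗ₜ[ℂ] phi) (n ⊗ₜ[ℂ] psi))
            = ∑ i ∈ r.index, ∑ j ∈ (a i).index, ∑ k ∈ s.index,
                ∑ u ∈ (c i j).index, ∑ v ∈ (d k).index,
                ((a i).right j * s.right k) ⊗ₜ[ℂ]
                  (ract ((c i j).right u * (d k).right v) m *
                   ract ((HopfAlgebra.antipode (R := ℂ) (r.left i) * (c i j).left u) *
                     (d k).left v) n) := by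
          rw [hmulR, ← r.eq]
          simp only [map_sum, TensorProduct.map_tmul, LinearMap.comp_apply,
            LinearMap.mulLeft_apply, LinearMap.mulRight_apply, LinearMap.flip_apply]
          refine Finset.sum_congr rfl fun i _ => ?_
          rw [f_tmul _ _ (reprMul (a i) s)]
          simp only [reprMul]
          rw [Finset.sum_product]
          refine Finset.sum_congr rfl fun j _ => Finset.sum_congr rfl fun k _ => ?_
          rw [act1 i j k]
          simp only [TensorProduct.tmul_sum]
        have lhs2 : B ((∑ i ∈ r.index, ∑ j ∈ (a i).index, ∑ u ∈ (c i j).index,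
              (HopfAlgebra.antipode (R := ℂ) (r.left i) * (c i j).left u)
                ⊗ₜ[ℂ] ((c i j).right u ⊗ₜ[ℂ] (a i).right j)) ⊗ₜ[ℂ]
            (∑ k ∈ s.index, ∑ v ∈ (d k).index,
              (d k).left v ⊗ₜ[ℂ] ((d k).right v ⊗ₜ[ℂ] s.right k)))
            = ∑ i ∈ r.index, ∑ j ∈ (a i).index, ∑ k ∈ s.index,
                ∑ u ∈ (c i j).index, ∑ v ∈ (d k).index,
                ((a i).right j * s.right k) ⊗ₜ[ℂ]
                  (ract ((c i j).right u * (d k).right v) m *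
                   ract ((HopfAlgebra.antipode (R := ℂ) (r.left i) * (c i j).left u) *
                     (d k).left v) n) := by
          rw [TensorProduct.sum_tmul, map_sum]
          refine Finset.sum_congr rfl fun i _ => ?_
          rw [TensorProduct.sum_tmul, map_sum]
          refine Finset.sum_congr rfl fun j _ => ?_
          rw [TensorProduct.tmul_sum, map_sum]
          refine Finset.sum_congr rfl fun k _ => ?_
          rw [TensorProduct.sum_tmul, map_sum]
          refine Finset.sum_congr rfl fun u _ => ?_
          rw [TensorProduct.tmul_sum, map_sum]
          exact Finset.sum_congr rfl fun v _ => hB _ _ _ _ _ _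
        have lhs3 : B (((1 : H) ⊗ₜ[ℂ] Coalgebra.comul (R := ℂ) phi) ⊗ₜ[ℂ]
              (∑ k ∈ s.index, ∑ l ∈ (e k).index,
                s.left k ⊗ₜ[ℂ] ((e k).left l ⊗ₜ[ℂ] (e k).right l)))
            = ∑ k ∈ s.index, ∑ l ∈ (e k).index, ∑ i ∈ r.index,
                (r.right i * (e k).right l) ⊗ₜ[ℂ]
                  (ract (r.left i * (e k).left l) m * ract (s.left k) n) := by
          rw [← r.eq, TensorProduct.tmul_sum, map_sum]
          refine Finset.sum_congr rfl fun k _ => ?_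
          rw [TensorProduct.tmul_sum, map_sum]
          refine Finset.sum_congr rfl fun l _ => ?_
          rw [TensorProduct.tmul_sum, TensorProduct.sum_tmul, map_sum]
          refine Finset.sum_congr rfl fun i _ => ?_
          rw [hB, one_mul]
        have reorder : ∑ k ∈ s.index, ∑ l ∈ (e k).index, ∑ i ∈ r.index,
                (r.right i * (e k).right l) ⊗ₜ[ℂ]
                  (ract (r.left i * (e k).left l) m * ract (s.left k) n)
            = ∑ k ∈ s.index, ∑ i ∈ r.index, ∑ l ∈ (e k).index,
                (r.right i * (e k).right l) ⊗ₜ[ℂ]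
                  (ract (r.left i * (e k).left l) m * ract (s.left k) n) :=
          Finset.sum_congr rfl fun k _ => Finset.sum_comm
        have rhs1 : mulL (f (m ⊗ₜ[ℂ] phi)) (f (n ⊗ₜ[ℂ] psi))
            = ∑ k ∈ s.index, ∑ i ∈ r.index, ∑ l ∈ (e k).index,
                (r.right i * (e k).right l) ⊗ₜ[ℂ]
                  (ract (r.left i * (e k).left l) m * ract (s.left k) n) := by
          rw [f_tmul m phi r, f_tmul n psi s, map_sum]
          refine Finset.sum_congr rfl fun k _ => ?_
          rw [map_sum, LinearMap.sum_apply]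
          refine Finset.sum_congr rfl fun i _ => ?_
          rw [hmulL, ← (e k).eq]
          simp only [map_sum, TensorProduct.map_tmul, LinearMap.comp_apply,
            LinearMap.mulLeft_apply, LinearMap.mulRight_apply, LinearMap.flip_apply,
            TensorProduct.comm_tmul, hract_mul]
        rw [lhs1, ← lhs2, key3 phi r a c, Coalgebra.sum_tmul_tmul_eq s d e, lhs3,
          reorder, rhs1]


  · -- unit
    rw [hf, hmulL]
    simp only [Bialgebra.comul_one, Algebra.TensorProduct.one_def,
      TensorProduct.map_tmul, LinearMap.comp_apply, LinearMap.mulRight_apply,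
      LinearMap.mulLeft_apply, LinearMap.flip_apply, mul_one, one_mul,
      TensorProduct.comm_tmul, hract_one]
  · -- g ∘ f = id
    intro x
    induction x using TensorProduct.induction_on with
    | zero => simp
    | add u v hu hv => simp [map_add, hu, hv]
    | tmul m φ =>
      set r := ℛ ℂ φ with hrdef
      set a : (i : H × H) → Coalgebra.Repr ℂ (r.right i) (H × H) := fun i => ℛ ℂ (r.right i) with hadef
      rw [f_tmul m φ r, map_sum]
      have step : ∀ i ∈ r.index,
          g (r.right i ⊗ₜ[ℂ] ract (r.left i) m)
          = ∑ j ∈ (a i).index,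
              ract (r.left i * HopfAlgebra.antipode (R := ℂ) ((a i).left j)) m
                ⊗ₜ[ℂ] (a i).right j := by
        intro i _
        rw [g_tmul _ _ (a i)]
        exact Finset.sum_congr rfl fun j _ => by rw [hract_mul]
      rw [Finset.sum_congr rfl step]
      have h := congrArg (TensorProduct.map (ract.flip m) (LinearMap.id (R := ℂ) (M := H)))
        (key1 φ r a)
      simp only [map_sum, TensorProduct.map_tmul, LinearMap.flip_apply,
        LinearMap.id_apply] at h
      rw [h, hract_one]
  · -- f ∘ g = id
    intro y
    induction y using TensorProduct.induction_on with
    | zero => simp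
    | add u v hu hv => simp [map_add, hu, hv]
    | tmul φ m =>
      set r := ℛ ℂ φ with hrdef
      set a : (i : H × H) → Coalgebra.Repr ℂ (r.right i) (H × H) := fun i => ℛ ℂ (r.right i) with hadef
      rw [g_tmul φ m r, map_sum]
      have step : ∀ i ∈ r.index,
          f (ract (HopfAlgebra.antipode (R := ℂ) (r.left i)) m ⊗ₜ[ℂ] r.right i)
          = ∑ j ∈ (a i).index,
              (a i).right j ⊗ₜ[ℂ]
                ract (HopfAlgebra.antipode (R := ℂ) (r.left i) * (a i).left j) m := by
        intro i _
        rw [f_tmul _ _ (a i)]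
        exact Finset.sum_congr rfl fun j _ => by rw [hract_mul]
      rw [Finset.sum_congr rfl step]
      have h := congrArg
        ((TensorProduct.comm ℂ M H).toLinearMap ∘ₗ
          TensorProduct.map (ract.flip m) (LinearMap.id (R := ℂ) (M := H)))
        (key2 φ r a)
      simp only [map_sum, LinearMap.comp_apply, LinearEquiv.coe_coe,
        TensorProduct.map_tmul, LinearMap.flip_apply, LinearMap.id_apply,
        TensorProduct.comm_tmul] at h
      rw [h, hract_one]
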